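/- Let m, k, l, N be positive integers with m > 1, k ∤ m and 1 ≤ l < k, and let Γ_0 denote the multiplicity of 0 as a root of W_N^{[m,k,l]}(z). Then m divides Γ − Γ_0, and there exists a monic polynomial Q ∈ ℂ[w] with Q(0) ≠ 0 such that W_N^{[m,k,l]}(z) = z^{Γ_0} · Q(z^m) for all z. -/

import Mathlib

open scoped BigOperators

/-- `pPoly m j` is the polynomial `p_j^{[m]}(z) = ∑_{i=0}^{⌊j/m⌋} z^{j-im}/(i!(j-im)!)`
for `j ≥ 0`, and `0` for `j < 0`. -/
noncomputable def pPoly (m : ℕ) : ℤ → Polynomial ℂ := fun j =>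
  if 0 ≤ j then
    ∑ i ∈ Finset.range (j.toNat / m + 1),
      Polynomial.C (((Nat.factorial i * Nat.factorial (j.toNat - i * m) : ℕ) : ℂ))⁻¹ *
        Polynomial.X ^ (j.toNat - i * m)
  else 0

/-- The normalizing constant `c_N^{[m,k,l]} = k^{-N(N-1)/2} ∏_{i=1}^{N} (k(i-1)+l)!/(i-1)!`. -/
noncomputable def cConst (k l N : ℕ) : ℂ :=
  ((k : ℂ) ^ (N * (N - 1) / 2))⁻¹ *
    ∏ i ∈ Finset.range N, ((Nat.factorial (k * i + l) : ℂ) / ((Nat.factorial i : ℕ) : ℂ))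

/-- The generalized Wronskian–Hermite polynomial
`W_N^{[m,k,l]}(z) = c_N^{[m,k,l]} · det_{1≤i,j≤N} ( p^{[m]}_{k(j-1)+l-i+1}(z) )`. -/
noncomputable def WPoly (m k l N : ℕ) : Polynomial ℂ :=
  Polynomial.C (cConst k l N) *
    Matrix.det (Matrix.of fun i j : Fin N =>
      pPoly m (((k * (j : ℕ) + l : ℕ) : ℤ) - ((i : ℕ) : ℤ)))

/-! Every monomial `z^e` of `p_j` has `e ≡ j (mod m)`, so every term `∏_j p_{k j + l - σ j}` of the
determinant only has exponents `e ≡ Σ_j (k j + l - σ j) = Γ (mod m)`; this gives `m ∣ Γ - Γ₀` and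
`W = z^{Γ₀} Q(z^m)` with `Q(0) ≠ 0`. Keeping only the top term `z^j / j!` of each `p_j`, the
coefficient of `z^Γ` in the determinant is `det (1 / (k j + l - i)!)`; scaling column `j` by
`(k j + l)!` turns it into the Vandermonde determinant of the numbers `k j + l`, which is
`k^{N(N-1)/2} ∏_{i<N} i!`. This is `c_N⁻¹ ∏_j (k j + l)!`, so `W`, and with it `Q`, is monic. -/

open Polynomial Finset
open scoped Nat

section Semiring

variable {R : Type*} [Semiring R] {m : ℕ}

def ExponentsModEq (m : ℕ) (r : ZMod m) (P : R[X]) : Prop :=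
  ∀ e ∈ P.support, (e : ZMod m) = r

theorem exponentsModEq_zero (r : ZMod m) : ExponentsModEq m r (0 : R[X]) := by
  simp [ExponentsModEq]

theorem exponentsModEq_C (c : R) : ExponentsModEq m 0 (C c) := fun e he => by
  rw [Finset.mem_singleton.1 (support_C_subset c he), Nat.cast_zero]

theorem exponentsModEq_X_pow (n : ℕ) : ExponentsModEq m n (X ^ n : R[X]) := fun e he => by
  rw [← monomial_one_right_eq_X_pow] at he
  rw [Finset.mem_singleton.1 (support_monomial_subset n (1 : R) he)]

namespace ExponentsModEq

variable {r s : ZMod m} {P Q : R[X]}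

theorem mul (hP : ExponentsModEq m r P) (hQ : ExponentsModEq m s Q) :
    ExponentsModEq m (r + s) (P * Q) := fun e he => by
  rw [mem_support_iff, coeff_mul] at he
  obtain ⟨⟨x, y⟩, hxy, hne⟩ := Finset.exists_ne_zero_of_sum_ne_zero he
  rw [← mem_antidiagonal.1 hxy, Nat.cast_add, hP x (mem_support_iff.2 (left_ne_zero_of_mul hne)),
    hQ y (mem_support_iff.2 (right_ne_zero_of_mul hne))]

theorem C_mul (c : R) (hP : ExponentsModEq m r P) : ExponentsModEq m r (C c * P) :=
  zero_add r ▸ (exponentsModEq_C c).mul hP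

theorem sum {ι : Type*} {s : Finset ι} {f : ι → R[X]} (h : ∀ i ∈ s, ExponentsModEq m r (f i)) :
    ExponentsModEq m r (∑ i ∈ s, f i) := fun e he => by
  rw [mem_support_iff, finsetSum_coeff] at he
  obtain ⟨i, hi, he⟩ := Finset.exists_ne_zero_of_sum_ne_zero he
  exact h i hi e (mem_support_iff.2 he)

end ExponentsModEq

end Semiring

section CommSemiring

variable {R : Type*} [CommSemiring R] {m : ℕ}

theorem exponentsModEq_prod {ι : Type*} (s : Finset ι) {f : ι → R[X]} {r : ι → ZMod m}
    (h : ∀ i ∈ s, ExponentsModEq m (r i) (f i)) :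
    ExponentsModEq m (∑ i ∈ s, r i) (∏ i ∈ s, f i) := by
  induction s using Finset.cons_induction with
  | empty => simpa using exponentsModEq_C (1 : R)
  | cons a t ha ih =>
    rw [Finset.prod_cons, Finset.sum_cons]
    exact (h a (mem_cons_self a t)).mul (ih fun i hi => h i (mem_cons_of_mem hi))

theorem expand_contract_of_forall_dvd {p : ℕ} (hp : p ≠ 0)
    {f : R[X]} (hf : ∀ n, f.coeff n ≠ 0 → p ∣ n) : expand R p (contract p f) = f := by
  ext n
  rw [coeff_expand hp.bot_lt, coeff_contract hp]
  split_ifs with h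
  · rw [Nat.div_mul_cancel h]
  · exact (not_not.1 (mt (hf n) h)).symm

theorem ExponentsModEq.exists_eq_X_pow_mul_expand {r : ZMod m} {P : R[X]}
    (hP : ExponentsModEq m r P) (hm : m ≠ 0) :
    ∃ Q : R[X], P = X ^ P.natTrailingDegree * expand R m Q ∧ Q.coeff 0 = P.trailingCoeff := by
  set t := P.natTrailingDegree
  obtain ⟨P', hP'⟩ : X ^ t ∣ P :=
    X_pow_dvd_iff.2 fun d hd => coeff_eq_zero_of_lt_natTrailingDegree hd
  have hcoeff (e : ℕ) : P'.coeff e = P.coeff (e + t) := by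
    rw [hP', coeff_X_pow_mul]
  have hdvd (e : ℕ) (he : P'.coeff e ≠ 0) : m ∣ e := by
    rw [hcoeff] at he
    have hP0 : P ≠ 0 := by rintro rfl; simp at he
    have h := hP _ (mem_support_iff.2 he)
    rw [Nat.cast_add, hP _ (natTrailingDegree_mem_support_of_nonzero hP0), add_eq_right] at h
    exact (ZMod.natCast_eq_zero_iff _ _).1 h
  refine ⟨contract m P', ?_, by rw [coeff_contract hm, zero_mul, hcoeff, zero_add]; rfl⟩
  rw [expand_contract_of_forall_dvd hm hdvd, ← hP']

theorem coeff_prod_sum_of_natDegree_le {ι : Type*} (s : Finset ι)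
    (f : ι → R[X]) (d : ι → ℕ) (h : ∀ i ∈ s, (f i).natDegree ≤ d i) :
    (∏ i ∈ s, f i).coeff (∑ i ∈ s, d i) = ∏ i ∈ s, (f i).coeff (d i) := by
  induction s using Finset.cons_induction with
  | empty => simp
  | cons a t ha ih =>
    have ht : ∀ i ∈ t, (f i).natDegree ≤ d i := fun i hi => h i (mem_cons_of_mem hi)
    rw [prod_cons, sum_cons, prod_cons, coeff_mul_add_eq_of_natDegree_le (h a (mem_cons_self a t))
      ((natDegree_prod_le t f).trans (sum_le_sum ht)), ih ht]

end CommSemiring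

section DetCoeff

variable {R n : Type*} [CommRing R] [Fintype n] {M : Matrix n n R[X]} {a b : n → ℕ}

theorem natDegree_prod_perm_le_and_coeff (hdeg : ∀ i j, (M i j).natDegree ≤ a j - b i)
    (hzero : ∀ i j, a j < b i → M i j = 0) (σ : Equiv.Perm n) :
    (∏ j, M (σ j) j).natDegree ≤ ∑ j, a j - ∑ i, b i ∧
      (∏ j, M (σ j) j).coeff (∑ j, a j - ∑ i, b i) = ∏ j, (M (σ j) j).coeff (a j - b (σ j)) := by
  by_cases hσ : ∀ j, b (σ j) ≤ a j
  · have hsum : ∑ j, (a j - b (σ j)) = ∑ j, a j - ∑ i, b i := by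
      rw [sum_tsub_distrib _ fun j _ => hσ j, Equiv.sum_comp σ b]
    rw [← hsum]
    exact ⟨(natDegree_prod_le _ _).trans (sum_le_sum fun j _ => hdeg _ _),
      coeff_prod_sum_of_natDegree_le _ _ _ fun j _ => hdeg _ _⟩
  · obtain ⟨j₀, hj₀⟩ := not_forall.1 hσ
    have hM : M (σ j₀) j₀ = 0 := hzero _ _ (not_le.1 hj₀)
    rw [prod_eq_zero (f := fun j => M (σ j) j) (mem_univ j₀) hM,
      prod_eq_zero (f := fun j => (M (σ j) j).coeff _) (mem_univ j₀) (by rw [hM, coeff_zero])]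
    simp

variable [DecidableEq n]

theorem exponentsModEq_det {m : ℕ} {u v : n → ZMod m}
    (h : ∀ i j, ExponentsModEq m (u j - v i) (M i j)) :
    ExponentsModEq m (∑ j, u j - ∑ i, v i) M.det := by
  rw [Matrix.det_apply']
  refine ExponentsModEq.sum fun σ _ => ?_
  have hσ : ∑ j, (u j - v (σ j)) = ∑ j, u j - ∑ i, v i := by
    rw [Finset.sum_sub_distrib, Equiv.sum_comp σ v]
  rw [← C_eq_intCast, ← hσ]
  exact ExponentsModEq.C_mul _ (exponentsModEq_prod _ fun j _ => h (σ j) j)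

theorem natDegree_det_le_of_natDegree_le (hdeg : ∀ i j, (M i j).natDegree ≤ a j - b i)
    (hzero : ∀ i j, a j < b i → M i j = 0) : M.det.natDegree ≤ ∑ j, a j - ∑ i, b i := by
  rw [Matrix.det_apply']
  refine natDegree_sum_le_of_forall_le _ _ fun σ _ => ?_
  rw [← C_eq_intCast]
  exact (natDegree_C_mul_le _ _).trans (natDegree_prod_perm_le_and_coeff hdeg hzero σ).1

theorem coeff_det_of_natDegree_le (hdeg : ∀ i j, (M i j).natDegree ≤ a j - b i)
    (hzero : ∀ i j, a j < b i → M i j = 0) :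
    M.det.coeff (∑ j, a j - ∑ i, b i) = (Matrix.of fun i j => (M i j).coeff (a j - b i)).det := by
  simp only [Matrix.det_apply', finsetSum_coeff, ← C_eq_intCast, coeff_C_mul,
    (natDegree_prod_perm_le_and_coeff hdeg hzero _).2, Matrix.of_apply]

end DetCoeff

section Vandermonde

open Matrix

theorem det_descFactorial_eq_det_vandermonde {R : Type*} [CommRing R] [IsDomain R] {n : ℕ}
    (a : Fin n → ℕ) :
    (of fun i j : Fin n => ((a j).descFactorial i : R)).det =
      (vandermonde fun j => (a j : R)).det := by
  rw [det_eval_matrixOfPolynomials_eq_det_vandermonde _ _ (fun i => descPochhammer_natDegree R i)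
    (fun i => monic_descPochhammer R i), ← det_transpose]
  congr
  ext i j
  simp [descPochhammer_eval_eq_descFactorial]

theorem det_vandermonde_const_mul {R : Type*} [CommRing R] {n : ℕ} (c : R) (v : Fin n → R) :
    (vandermonde fun i => c * v i).det = c ^ (n * (n - 1) / 2) * (vandermonde v).det := by
  have h : vandermonde (fun i => c * v i) =
      vandermonde v * diagonal fun j : Fin n => c ^ (j : ℕ) := by
    ext i j
    simp [vandermonde_apply, mul_pow, mul_comm]
  rw [h, det_mul, det_diagonal, prod_pow_eq_pow_sum, Fin.sum_univ_eq_sum_range (fun i => i) n,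
    sum_range_id, mul_comm]

theorem det_vandermonde_natCast {R : Type*} [CommRing R] (n : ℕ) :
    (vandermonde fun i : Fin n => (i : R)).det = ∏ i ∈ range n, (i ! : R) := by
  cases n with
  | zero => simp
  | succ n =>
    rw [det_vandermonde_id_eq_superFactorial, ← Nat.prod_range_succ_factorial]
    push_cast
    rfl

theorem det_descFactorial_div_factorial {K : Type*} [Field K] {n : ℕ} (a : Fin n → ℕ) :
    (of fun i j : Fin n => ((a j).descFactorial i : K) / (a j)!).det =
      (∏ j, ((a j)! : K))⁻¹ * (vandermonde fun j => (a j : K)).det := by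
  have h := det_mul_row (fun j => ((a j)! : K)⁻¹)
    (of fun i j : Fin n => ((a j).descFactorial i : K))
  simp only [of_apply, ← div_eq_inv_mul] at h
  rw [h, det_descFactorial_eq_det_vandermonde, prod_inv_distrib]

end Vandermonde

section WronskianHermite

theorem mul_le_of_mem_range_div_add_one {i j m : ℕ} (hi : i ∈ range (j / m + 1)) : i * m ≤ j :=
  (Nat.mul_le_mul_right m (Nat.lt_succ_iff.1 (mem_range.1 hi))).trans (Nat.div_mul_le_self j m)

variable {m : ℕ}

theorem pPoly_natCast (m j : ℕ) : pPoly m j =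
    ∑ i ∈ range (j / m + 1), C ((i ! * (j - i * m)! : ℕ) : ℂ)⁻¹ * X ^ (j - i * m) := by
  simp [pPoly]

theorem pPoly_natCast_sub_of_lt {a i : ℕ} (h : a < i) : pPoly m ((a : ℤ) - i) = 0 :=
  if_neg (by omega)

theorem natDegree_pPoly_natCast_le (m j : ℕ) : (pPoly m j).natDegree ≤ j := by
  rw [pPoly_natCast]
  refine natDegree_sum_le_of_forall_le _ _ fun i _ => (natDegree_C_mul_le _ _).trans ?_
  rw [natDegree_X_pow]
  exact Nat.sub_le j (i * m)

theorem coeff_pPoly_natCast_self (hm : m ≠ 0) (j : ℕ) : (pPoly m j).coeff j = (j ! : ℂ)⁻¹ := by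
  rw [pPoly_natCast, finsetSum_coeff, sum_eq_single 0 (fun i hi hi0 => ?_) (by simp)]
  · simp
  · have : j - i * m ≠ j := by
      have := mul_le_of_mem_range_div_add_one hi
      have := mul_ne_zero hi0 hm
      omega
    rw [coeff_C_mul, coeff_X_pow, if_neg this.symm, mul_zero]

theorem exponentsModEq_pPoly (m : ℕ) (j : ℤ) : ExponentsModEq m j (pPoly m j) := by
  rcases lt_or_ge j 0 with hj | hj
  · rw [pPoly, if_neg (not_le.2 hj)]
    exact exponentsModEq_zero _
  · lift j to ℕ using hj
    rw [pPoly_natCast]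
    refine ExponentsModEq.sum fun i hi => ?_
    have h : ((j - i * m : ℕ) : ZMod m) = j := by
      rw [Nat.cast_sub (mul_le_of_mem_range_div_add_one hi), Nat.cast_mul, ZMod.natCast_self,
        mul_zero, sub_zero]
    rw [Int.cast_natCast, ← h]
    exact (exponentsModEq_X_pow _).C_mul _

theorem natDegree_pPoly_natCast_sub_le (m a i : ℕ) : (pPoly m ((a : ℤ) - i)).natDegree ≤ a - i := by
  rcases le_or_gt i a with h | h
  · rw [← Nat.cast_sub h]
    exact natDegree_pPoly_natCast_le m _
  · simp [pPoly_natCast_sub_of_lt h]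

theorem coeff_pPoly_natCast_sub (hm : m ≠ 0) (a i : ℕ) :
    (pPoly m ((a : ℤ) - i)).coeff (a - i) = (a.descFactorial i : ℂ) / a ! := by
  rcases le_or_gt i a with h | h
  · rw [← Nat.cast_sub h, coeff_pPoly_natCast_self hm, ← Nat.factorial_mul_descFactorial h,
      Nat.cast_mul]
    have : (a.descFactorial i : ℂ) ≠ 0 :=
      Nat.cast_ne_zero.2 fun h0 => (Nat.descFactorial_eq_zero_iff_lt.1 h0).not_ge h
    field_simp
  · simp [pPoly_natCast_sub_of_lt h, Nat.descFactorial_eq_zero_iff_lt.2 h]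

theorem sum_range_mul_add {k : ℕ} (hk : 0 < k) (l N : ℕ) :
    ∑ j ∈ range N, (k * j + l) = N * ((k - 1) * (N - 1) + 2 * l) / 2 + ∑ j ∈ range N, j := by
  obtain ⟨k, rfl⟩ : ∃ k', k = k' + 1 := ⟨k - 1, by omega⟩
  have h : N * (k * (N - 1) + 2 * l) = 2 * (k * ∑ j ∈ range N, j + N * l) := by
    rw [mul_add, mul_left_comm, ← sum_range_id_mul_two]
    ring
  rw [sum_add_distrib, ← mul_sum, sum_const, card_range, smul_eq_mul, Nat.add_sub_cancel, h,
    Nat.mul_div_cancel_left _ two_pos]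
  ring

variable {k : ℕ}

theorem monic_wPoly (hm : m ≠ 0) (hk : k ≠ 0) (l N : ℕ) : (WPoly m k l N).Monic := by
  let M : Matrix (Fin N) (Fin N) ℂ[X] := Matrix.of fun i j =>
    pPoly m (((k * (j : ℕ) + l : ℕ) : ℤ) - ((i : ℕ) : ℤ))
  have hdeg (i j : Fin N) : (M i j).natDegree ≤ (k * j + l) - i :=
    natDegree_pPoly_natCast_sub_le m _ _
  have hzero (i j : Fin N) (h : k * j + l < i) : M i j = 0 := pPoly_natCast_sub_of_lt h
  refine monic_of_natDegree_le_of_coeff_eq_one _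
    ((natDegree_C_mul_le _ _).trans (natDegree_det_le_of_natDegree_le hdeg hzero)) ?_
  rw [WPoly, coeff_C_mul, coeff_det_of_natDegree_le hdeg hzero]
  simp only [M, Matrix.of_apply, coeff_pPoly_natCast_sub hm]
  rw [det_descFactorial_div_factorial]
  simp only [Nat.cast_add, Nat.cast_mul, Matrix.det_vandermonde_add, det_vandermonde_const_mul,
    det_vandermonde_natCast]
  rw [cConst, Fin.prod_univ_eq_prod_range (fun j => ((k * j + l)! : ℂ)), prod_div_distrib]
  have hk' : (k : ℂ) ^ (N * (N - 1) / 2) ≠ 0 := pow_ne_zero _ (Nat.cast_ne_zero.2 hk)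
  have h1 : ∏ i ∈ range N, ((k * i + l)! : ℂ) ≠ 0 := prod_ne_zero_iff.2 fun _ _ =>
    Nat.cast_ne_zero.2 (Nat.factorial_ne_zero _)
  have h2 : ∏ i ∈ range N, (i ! : ℂ) ≠ 0 := prod_ne_zero_iff.2 fun _ _ =>
    Nat.cast_ne_zero.2 (Nat.factorial_ne_zero _)
  field_simp

theorem exponentsModEq_wPoly (m : ℕ) (hk : 0 < k) (l N : ℕ) :
    ExponentsModEq m ((N * ((k - 1) * (N - 1) + 2 * l) / 2 : ℕ) : ZMod m) (WPoly m k l N) := by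
  have hΓ : ∑ j : Fin N, ((k * j + l : ℕ) : ZMod m) - ∑ i : Fin N, ((i : ℕ) : ZMod m) =
      ((N * ((k - 1) * (N - 1) + 2 * l) / 2 : ℕ) : ZMod m) := by
    rw [← Nat.cast_sum, ← Nat.cast_sum, Fin.sum_univ_eq_sum_range (fun j => k * j + l),
      Fin.sum_univ_eq_sum_range (fun i => i) N, sum_range_mul_add hk, Nat.cast_add,
      add_sub_cancel_right]
  rw [WPoly, ← hΓ]
  refine (exponentsModEq_det fun i j => ?_).C_mul _
  simpa using exponentsModEq_pPoly m (((k * (j : ℕ) + l : ℕ) : ℤ) - ((i : ℕ) : ℤ))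

end WronskianHermite

theorem wronskianHermite_factorization_general
    (m k l N : ℕ) (hm : 1 < m) (hlk : l < k) :
    (m : ℤ) ∣ ((N * ((k - 1) * (N - 1) + 2 * l) / 2 : ℕ) : ℤ)
        - ((WPoly m k l N).rootMultiplicity 0 : ℤ) ∧
      ∃ Q : Polynomial ℂ, Q.Monic ∧ Q.eval 0 ≠ 0 ∧
        ∀ z : ℂ, (WPoly m k l N).eval z =
          z ^ ((WPoly m k l N).rootMultiplicity 0) * Q.eval (z ^ m) := by
  have hm0 : m ≠ 0 := by omega
  have hk : 0 < k := by omega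
  have hmonic := monic_wPoly hm0 hk.ne' l N
  have hcongr := exponentsModEq_wPoly m hk l N
  obtain ⟨Q, hWQ, hQ0⟩ := hcongr.exists_eq_X_pow_mul_expand hm0
  rw [rootMultiplicity_eq_natTrailingDegree']
  refine ⟨?_, Q, ?_, ?_, fun z => ?_⟩
  · have h := hcongr _ (natTrailingDegree_mem_support_of_nonzero hmonic.ne_zero)
    exact (ZMod.intCast_eq_intCast_iff_dvd_sub _ _ _).1 (by exact_mod_cast h)
  · exact (monic_expand_iff hm0.bot_lt).1 ((monic_X_pow _).of_mul_monic_left (hWQ ▸ hmonic))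
  · rw [← coeff_zero_eq_eval_zero, hQ0]
    exact trailingCoeff_nonzero_iff_nonzero.2 hmonic.ne_zero
  · conv_lhs => rw [hWQ]
    rw [eval_mul, eval_pow, eval_X, expand_eval]

/-- For positive integers `m, k, l, N` with `m > 1`, `k ∤ m` and `1 ≤ l < k`, letting
`Γ = N((k-1)(N-1)+2l)/2` and `Γ₀` be the multiplicity of `0` as a root of `W_N^{[m,k,l]}`,
we have `m ∣ Γ - Γ₀`, and `W_N^{[m,k,l]}(z) = z^{Γ₀} · Q(z^m)` for a monic polynomial `Q`
with nonzero constant term. -/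
theorem wronskianHermite_factorization
    (m k l N : ℕ) (hm : 1 < m) (hk : ¬ k ∣ m) (hl : 1 ≤ l) (hlk : l < k) (hN : 0 < N) :
    (m : ℤ) ∣ ((N * ((k - 1) * (N - 1) + 2 * l) / 2 : ℕ) : ℤ)
        - ((WPoly m k l N).rootMultiplicity 0 : ℤ) ∧
      ∃ Q : Polynomial ℂ, Q.Monic ∧ Q.eval 0 ≠ 0 ∧
        ∀ z : ℂ, (WPoly m k l N).eval z =
          z ^ ((WPoly m k l N).rootMultiplicity 0) * Q.eval (z ^ m) :=
  wronskianHermite_factorization_general m k l N hm hlk
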